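/- Let (W,S) be a chordal Coxeter system with a set of bad irreducible simplices. Then S has a bad separator if and only if there is a bad maximal irreducible simplex A = {a,b,c} of (W,S) with m(a,b) = 2 and an element d ∈ S − (A ∪ A^⊥) such that {a,b,d} is a simplex of (W,S). -/

import Mathlib

/-- A simple graph is *chordal* if every cycle of length at least four has a chord,
that is, an edge of the graph joining two vertices of the cycle that is not an
edge of the cycle. -/
def SimpleGraph.IsChordal {V : Type*} (G : SimpleGraph V) : Prop :=
  ∀ ⦃v : V⦄ (w : G.Walk v v), w.IsCycle → 4 ≤ w.length →
    ∃ a b, a ∈ w.support ∧ b ∈ w.support ∧ G.Adj a b ∧ s(a, b) ∉ w.edges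

/-- `B` is a `(c,f)`-separator of `G`: `c, f ∉ B` and `c` and `f` lie in different
connected components of the induced subgraph `G − B`. -/
def SimpleGraph.IsSeparator {V : Type*} (G : SimpleGraph V) (c f : V) (Bs : Set V) : Prop :=
  ∃ (hc : c ∈ Bsᶜ) (hf : f ∈ Bsᶜ), ¬ (G.induce Bsᶜ).Reachable ⟨c, hc⟩ ⟨f, hf⟩

/-- `B` is a minimal `(c,f)`-separator: no proper subset of `B` is a `(c,f)`-separator. -/
def SimpleGraph.IsMinSeparator {V : Type*} (G : SimpleGraph V) (c f : V) (Bs : Set V) : Prop :=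
  G.IsSeparator c f Bs ∧ ∀ Bs' ⊂ Bs, ¬ G.IsSeparator c f Bs'

/-- `u` and `g` lie in the same connected component of `G − B`. -/
def SimpleGraph.InSepComp {V : Type*} (G : SimpleGraph V) (Bs : Set V) (u g : V) : Prop :=
  ∃ (hu : u ∈ Bsᶜ) (hg : g ∈ Bsᶜ), (G.induce Bsᶜ).Reachable ⟨u, hu⟩ ⟨g, hg⟩

namespace CoxeterMatrix

variable {B : Type*}

/-- The underlying graph of the presentation diagram of a Coxeter matrix:
vertices are the indices, and `s, t` are adjacent when `m(s,t) < ∞`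
(`0` encodes `∞`). -/
def pDiagram (M : CoxeterMatrix B) : SimpleGraph B where
  Adj s t := s ≠ t ∧ M s t ≠ 0
  symm := by constructor; intro s t h; exact ⟨h.1.symm, by rw [M.symmetric]; exact h.2⟩
  loopless := by constructor; intro s h; exact h.1 rfl

/-- The underlying graph of the Coxeter diagram induced on a subset `A`:
`s, t ∈ A` are adjacent when `m(s,t) > 2` (including `m(s,t) = ∞`, encoded by `0`). -/
def cDiagramOn (M : CoxeterMatrix B) (A : Set B) : SimpleGraph A where
  Adj s t := (s : B) ≠ (t : B) ∧ M s t ≠ 2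
  symm := by constructor; intro s t h; exact ⟨h.1.symm, by rw [M.symmetric]; exact h.2⟩
  loopless := by constructor; intro s h; exact h.1 rfl

/-- A *simplex*: a subset whose elements pairwise satisfy `m(s,t) < ∞`. -/
def IsSimplex (M : CoxeterMatrix B) (A : Set B) : Prop :=
  A.Pairwise fun s t => M s t ≠ 0

/-- A subset is *irreducible* if its Coxeter diagram is connected. -/
def IsIrreducible (M : CoxeterMatrix B) (A : Set B) : Prop :=
  (M.cDiagramOn A).Connected

def IsIrredSimplex (M : CoxeterMatrix B) (A : Set B) : Prop :=
  M.IsSimplex A ∧ M.IsIrreducible A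

/-- A maximal irreducible simplex. -/
def IsMaxIrredSimplex (M : CoxeterMatrix B) (A : Set B) : Prop :=
  M.IsIrredSimplex A ∧ ∀ A' : Set B, A ⊂ A' → ¬ M.IsIrredSimplex A'

/-- `A^⊥ = {s : m(s,a) = 2 for all a ∈ A}`. -/
def perp (M : CoxeterMatrix B) (A : Set B) : Set B :=
  {s | ∀ a ∈ A, M s a = 2}

/-- Type `G₃` (= `H₃`): labels `3, 5` on a path, other label `2`. -/
def IsTypeG3 (M : CoxeterMatrix B) (A : Set B) : Prop :=
  ∃ a b c : B, A = {a, b, c} ∧ M a b = 3 ∧ M b c = 5 ∧ M a c = 2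

/-- Type `G₄` (= `H₄`): labels `3, 3, 5` on a path, other labels `2`. -/
def IsTypeG4 (M : CoxeterMatrix B) (A : Set B) : Prop :=
  ∃ a b c d : B, A = {a, b, c, d} ∧ M a b = 3 ∧ M b c = 3 ∧ M c d = 5 ∧
    M a c = 2 ∧ M a d = 2 ∧ M b d = 2

/-- A set of *bad edges*: a symmetric set of pairs `{a,b}` with `m(a,b) ≥ 5` such that
every irreducible simplex properly containing `{a,b}` is of type `G₃` or `G₄`. -/
def IsBadEdgeSet (M : CoxeterMatrix B) (E : B → B → Prop) : Prop :=
  (∀ a b, E a b → E b a) ∧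
  (∀ a b, E a b → M a b = 0 ∨ 5 ≤ M a b) ∧
  (∀ a b, E a b → ∀ A : Set B, M.IsIrredSimplex A → ({a, b} : Set B) ⊂ A →
    M.IsTypeG3 A ∨ M.IsTypeG4 A)

/-- A *bad* irreducible simplex: an irreducible simplex containing a bad edge. -/
def IsBadSimplex (M : CoxeterMatrix B) (E : B → B → Prop) (A : Set B) : Prop :=
  M.IsIrredSimplex A ∧ ∃ a ∈ A, ∃ b ∈ A, E a b

/-- A *bad separator*: a subset `Bs` containing a pair of eyes `a, b` with `m(a,b) = 2`,
with a bad focus `c ∉ Bs` making `{a,b,c}` a bad maximal irreducible simplex,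
`Bs ⊆ {a,b} ∪ {a,b,c}^⊥`, and with a good focus `f ∉ Bs` making `Bs` a minimal
`(c,f)`-separator of the presentation diagram. -/
def IsBadSeparator (M : CoxeterMatrix B) (E : B → B → Prop) (Bs : Set B) : Prop :=
  ∃ a b c : B, a ∈ Bs ∧ b ∈ Bs ∧ M a b = 2 ∧ c ∉ Bs ∧
    M.IsMaxIrredSimplex {a, b, c} ∧ M.IsBadSimplex E {a, b, c} ∧
    Bs ⊆ {a, b} ∪ M.perp {a, b, c} ∧
    ∃ f, f ∉ Bs ∧ M.pDiagram.IsMinSeparator c f Bs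

/-- `{x, y}` is a bad 5-edge: `m(x,y) = 5` and every irreducible simplex
properly containing `{x,y}` is of type `G₃` or `G₄`. -/
def IsBad5Edge (M : CoxeterMatrix B) (x y : B) : Prop :=
  x ≠ y ∧ M x y = 5 ∧ ∀ A : Set B, M.IsIrredSimplex A → ({x, y} : Set B) ⊂ A →
    M.IsTypeG3 A ∨ M.IsTypeG4 A

/-- The bad-edge set consisting of the single unordered pair `{x, y}`. -/
def singleEdge (x y : B) : B → B → Prop :=
  fun u v => (u = x ∧ v = y) ∨ (u = y ∧ v = x)

end CoxeterMatrix

/-!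
The graph-theoretic heart is a rerouting property of chordal graphs: if `p` is adjacent to both
ends of a walk avoiding `p`, the walk can be replaced by one inside its support that runs through
neighbours of `p` only. Indeed, a shortest counterexample is a chordless path, and closing it up
through `p` gives a cycle of length at least four, whose chord must join `p` to an interior
vertex; splitting there gives shorter instances.

Given a bad separator `Bs` for `A = {a, b, c}`, every vertex of the minimal separator `Bs` has a
neighbour in the component of `f`; rerouting a walk in that component from a neighbour of `a`
to `b` through neighbours of `a` produces a common neighbour `d` of `a` and `b` there. It is not
in `A`, and not in `A^⊥`, since it would then be adjacent to `c`, which lies in another component.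

Conversely, `K = {a, b} ∪ A^⊥` separates `c` from `d`: rerouting a `c`–`d` walk outside `K`
through common neighbours of `a` and `b` yields a vertex joined by finite labels to all of `A`
but not in `A^⊥`, which would enlarge the maximal irreducible simplex `A`. A minimal separator
inside `K` contains `a` and `b`, as both are common neighbours of `c` and `d`.
-/

namespace SimpleGraph

variable {V : Type*} {G : SimpleGraph V}

namespace Walk

lemma two_le_length_of_adj_of_notMem_edges {u v : V} (w : G.Walk u v) (h : G.Adj u v)
    (he : s(u, v) ∉ w.edges) : 2 ≤ w.length := by
  rcases w with _ | ⟨h₁, _ | ⟨h₂, w⟩⟩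
  · exact absurd rfl h.ne
  · simp at he
  · simp

lemma exists_shorter_of_split {x u v y : V} (p : G.Walk x u) (q : G.Walk u v) (r : G.Walk v y)
    (h : G.Adj u v) (he : s(u, v) ∉ q.edges) :
    ∃ w : G.Walk x y, w.length < (p.append (q.append r)).length ∧
      w.support ⊆ (p.append (q.append r)).support := by
  refine ⟨p.append (cons h r), ?_, ?_⟩
  · have := q.two_le_length_of_adj_of_notMem_edges h he
    simp only [length_append, length_cons]
    omega
  · intro z hz
    simp only [mem_support_append_iff, support_cons, List.mem_cons] at hz ⊢
    rcases hz with hz | rfl | hz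
    · exact .inl hz
    · exact .inr (.inl q.start_mem_support)
    · exact .inr (.inr hz)

lemma exists_shorter_of_adj {x y a b : V} (w : G.Walk x y) (ha : a ∈ w.support)
    (hb : b ∈ w.support) (hab : G.Adj a b) (he : s(a, b) ∉ w.edges) :
    ∃ w' : G.Walk x y, w'.length < w.length ∧ w'.support ⊆ w.support := by
  classical
  have hb' := hb
  rw [← w.take_spec ha, mem_support_append_iff] at hb'
  rcases hb' with hb' | hb'
  · set p := w.takeUntil a ha
    have he' : s(b, a) ∉ (p.dropUntil b hb').edges := fun h' =>
      he (Sym2.eq_swap ▸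
        w.edges_takeUntil_subset_edges ha (p.edges_dropUntil_subset_edges hb' h'))
    have := exists_shorter_of_split (p.takeUntil b hb') (p.dropUntil b hb') (w.dropUntil a ha)
      hab.symm he'
    rwa [append_assoc, p.take_spec hb', w.take_spec ha] at this
  · set q := w.dropUntil a ha
    have he' : s(a, b) ∉ (q.takeUntil b hb').edges := fun h' =>
      he (w.edges_dropUntil_subset_edges ha (q.edges_takeUntil_subset_edges hb' h'))
    have := exists_shorter_of_split (w.takeUntil a ha) (q.takeUntil b hb') (q.dropUntil b hb')
      hab he'
    rwa [q.take_spec hb', w.take_spec ha] at this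

end Walk

/-- Closing the path up through `p` gives a cycle of length at least four. -/
lemma IsChordal.exists_chord_of_isPath (hG : G.IsChordal) {p x y : V} (w : G.Walk x y)
    (hw : w.IsPath) (hlen : 2 ≤ w.length) (hp : p ∉ w.support) (hpx : G.Adj p x)
    (hpy : G.Adj p y) :
    (∃ a ∈ w.support, ∃ b ∈ w.support, G.Adj a b ∧ s(a, b) ∉ w.edges) ∨
      ∃ z ∈ w.support, z ≠ x ∧ z ≠ y ∧ G.Adj p z := by
  have hxy : x ≠ y := by
    rintro rfl
    simp [Walk.length_eq_zero_iff.2 (Walk.isPath_iff_nil.1 hw)] at hlen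
  have hpy' : p ≠ y := fun h => hp (h ▸ w.end_mem_support)
  have hcycle : (Walk.cons hpx (w.concat hpy.symm)).IsCycle := by
    refine (Walk.cons_isCycle_iff _ hpx).2 ⟨hw.concat hp hpy.symm, ?_⟩
    rw [Walk.edges_concat, List.concat_eq_append, List.mem_append, List.mem_singleton,
      Sym2.eq_iff]
    rintro (he | ⟨rfl, rfl⟩ | ⟨-, rfl⟩)
    · exact hp (w.fst_mem_support_of_mem_edges he)
    · exact hpy' rfl
    · exact hxy rfl
  obtain ⟨a, b, ha, hb, hab, he⟩ :=
    hG _ hcycle (by simp only [Walk.length_cons, Walk.length_concat]; omega)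
  have hmem : ∀ z ∈ (Walk.cons hpx (w.concat hpy.symm)).support, z = p ∨ z ∈ w.support := by
    intro z hz
    simp only [Walk.support_cons, Walk.support_concat, List.mem_cons,
      List.mem_append, List.not_mem_nil, or_false] at hz
    tauto
  simp only [Walk.edges_cons, Walk.edges_concat, List.concat_eq_append, List.mem_cons,
    List.mem_append, List.not_mem_nil, or_false, not_or] at he
  obtain ⟨hpx', hw', hpy''⟩ := he
  rcases hmem a ha with rfl | haw <;> rcases hmem b hb with rfl | hbw
  · exact absurd rfl hab.ne
  · exact .inr ⟨b, hbw, by rintro rfl; exact hpx' rfl, by rintro rfl; exact hpy'' Sym2.eq_swap,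
      hab⟩
  · exact .inr ⟨a, haw, by rintro rfl; exact hpx' Sym2.eq_swap, by rintro rfl; exact hpy'' rfl,
      hab.symm⟩
  · exact .inl ⟨a, haw, b, hbw, hab, hw'⟩

open Walk in
theorem IsChordal.exists_walk_forall_adj (hG : G.IsChordal) {p x y : V} (w : G.Walk x y)
    (hp : p ∉ w.support) (hpx : G.Adj p x) (hpy : G.Adj p y) :
    ∃ w' : G.Walk x y, w'.support ⊆ w.support ∧ ∀ z ∈ w'.support, G.Adj p z := by
  classical
  induction hn : w.length using Nat.strong_induction_on generalizing x y w with
  | _ n ih =>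
  set u := w.bypass
  have hu : u.length ≤ n := hn ▸ w.length_bypass_le_length
  have husub : u.support ⊆ w.support := w.support_bypass_subset_support
  have hpu : p ∉ u.support := fun h => hp (husub h)
  by_cases hall : ∀ z ∈ u.support, G.Adj p z
  · exact ⟨u, husub, hall⟩
  by_cases hchord : ∃ a ∈ u.support, ∃ b ∈ u.support, G.Adj a b ∧ s(a, b) ∉ u.edges
  · obtain ⟨a, ha, b, hb, hab, he⟩ := hchord
    obtain ⟨u', hlt, hsub⟩ := u.exists_shorter_of_adj ha hb hab he
    obtain ⟨w', hs', ha'⟩ := ih _ (by omega) u' (fun h => hpu (hsub h)) hpx hpy rfl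
    exact ⟨w', fun t ht => husub (hsub (hs' ht)), ha'⟩
  push Not at hall hchord
  obtain ⟨z₀, hz₀, hpz₀⟩ := hall
  have hz₀x : z₀ ≠ x := by rintro rfl; exact hpz₀ hpx
  have hz₀y : z₀ ≠ y := by rintro rfl; exact hpz₀ hpy
  have hlen : 2 ≤ u.length := by
    have := congrArg length (u.take_spec hz₀)
    have := length_takeUntil_lt_length hz₀ hz₀y
    have := length_dropUntil_lt_length hz₀ hz₀x
    rw [length_append] at *
    omega
  obtain ⟨a, ha, b, hb, hab, he⟩ | ⟨z, hz, hzx, hzy, hpz⟩ :=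
    hG.exists_chord_of_isPath u w.bypass_isPath hlen hpu hpx hpy
  · exact absurd (hchord a ha b hb hab) he
  obtain ⟨w₁, hs₁, ha₁⟩ := ih _ ((length_takeUntil_lt_length hz hzy).trans_le hu)
    (u.takeUntil z hz) (fun h => hpu (u.support_takeUntil_subset_support hz h)) hpx hpz rfl
  obtain ⟨w₂, hs₂, ha₂⟩ := ih _ ((length_dropUntil_lt_length hz hzx).trans_le hu)
    (u.dropUntil z hz) (fun h => hpu (u.support_dropUntil_subset_support hz h)) hpz hpy rfl
  refine ⟨w₁.append w₂, fun t ht => ?_, fun t ht => ?_⟩ <;>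
    rw [mem_support_append_iff] at ht
  · exact husub (ht.elim (fun h => u.support_takeUntil_subset_support hz (hs₁ h))
      (fun h => u.support_dropUntil_subset_support hz (hs₂ h)))
  · exact ht.elim (ha₁ t) (ha₂ t)

variable {Bs : Set V} {a b c d f u v x y : V}

lemma inSepComp_iff_exists_walk :
    G.InSepComp Bs u v ↔ ∃ w : G.Walk u v, ∀ z ∈ w.support, z ∉ Bs := by
  constructor
  · rintro ⟨hu, hv, ⟨w⟩⟩
    refine ⟨w.map (Embedding.induce _).toHom, fun z hz => ?_⟩
    obtain ⟨⟨z, hzB⟩, -, rfl⟩ := List.mem_map.1 (w.support_map _ ▸ hz)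
    exact hzB
  · rintro ⟨w, hw⟩
    exact ⟨_, _, ⟨w.induce Bsᶜ hw⟩⟩

lemma InSepComp.symm (h : G.InSepComp Bs u v) : G.InSepComp Bs v u :=
  let ⟨hu, hv, r⟩ := h
  ⟨hv, hu, r.symm⟩

lemma InSepComp.trans (h₁ : G.InSepComp Bs u v) (h₂ : G.InSepComp Bs v x) :
    G.InSepComp Bs u x :=
  let ⟨hu, _, r₁⟩ := h₁
  let ⟨_, hx, r₂⟩ := h₂
  ⟨hu, hx, r₁.trans r₂⟩

lemma inSepComp_of_adj (h : G.Adj u v) (hu : u ∉ Bs) (hv : v ∉ Bs) : G.InSepComp Bs u v :=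
  ⟨hu, hv, (show (G.induce Bsᶜ).Adj ⟨u, hu⟩ ⟨v, hv⟩ from h).reachable⟩

lemma isSeparator_iff : G.IsSeparator c f Bs ↔ c ∉ Bs ∧ f ∉ Bs ∧ ¬ G.InSepComp Bs c f :=
  ⟨fun ⟨hc, hf, h⟩ => ⟨hc, hf, fun ⟨_, _, r⟩ => h r⟩,
    fun ⟨hc, hf, h⟩ => ⟨hc, hf, fun r => h ⟨hc, hf, r⟩⟩⟩

lemma Walk.exists_inSepComp_adj_mem (w : G.Walk x y) (hx : G.InSepComp Bs x f)
    (hy : ¬ G.InSepComp Bs y f) :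
    ∃ u ∈ w.support, ∃ v ∈ w.support, G.InSepComp Bs u f ∧ v ∈ Bs ∧ G.Adj u v := by
  obtain ⟨d, hd, hu, hv⟩ := w.exists_boundary_dart {z | G.InSepComp Bs z f} hx hy
  refine ⟨d.fst, w.dart_fst_mem_support_of_mem_darts hd, d.snd,
    w.dart_snd_mem_support_of_mem_darts hd, hu, ?_, d.adj⟩
  by_contra hvB
  exact hv ((inSepComp_of_adj d.adj.symm hvB hu.1).trans hu)

lemma IsSeparator.mem_of_adj (h : G.IsSeparator c f Bs) (hc : G.Adj c v) (hf : G.Adj v f) :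
    v ∈ Bs := by
  obtain ⟨hcB, hfB, hcf⟩ := isSeparator_iff.1 h
  by_contra hv
  exact hcf ((inSepComp_of_adj hc hcB hv).trans (inSepComp_of_adj hf hv hfB))

lemma IsSeparator.exists_isMinSeparator_subset [Finite V] (h : G.IsSeparator c f Bs) :
    ∃ Bs' ⊆ Bs, G.IsMinSeparator c f Bs' := by
  obtain ⟨Bs', ⟨hsub, hsep⟩, hmin⟩ :=
    (Set.toFinite {S | S ⊆ Bs ∧ G.IsSeparator c f S}).exists_minimal ⟨Bs, subset_rfl, h⟩
  refine ⟨Bs', hsub, hsep, fun S hS hS' => hS.ne ?_⟩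
  exact Minimal.eq_of_subset ⟨⟨hsub, hsep⟩, hmin⟩ ⟨hS.subset.trans hsub, hS'⟩ hS.subset

lemma IsMinSeparator.exists_inSepComp_adj (h : G.IsMinSeparator c f Bs) (hv : v ∈ Bs) :
    ∃ x, G.InSepComp Bs x f ∧ G.Adj x v := by
  obtain ⟨hc, hf, hcf⟩ := isSeparator_iff.1 h.1
  obtain ⟨w, hw⟩ : ∃ w : G.Walk f c, ∀ z ∈ w.support, z ∉ Bs \ {v} := by
    rw [← inSepComp_iff_exists_walk]
    by_contra hn
    exact h.2 _ (Set.sdiff_singleton_ssubset.2 hv)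
      (isSeparator_iff.2 ⟨fun h' => hc h'.1, fun h' => hf h'.1, fun h' => hn h'.symm⟩)
  obtain ⟨x, -, z, hz, hx, hzB, hxz⟩ := w.exists_inSepComp_adj_mem ⟨hf, hf, .refl _⟩ hcf
  obtain rfl : z = v := by simpa [hzB] using hw z hz
  exact ⟨x, hx, hxz⟩

theorem IsChordal.exists_inSepComp_adj_adj (hG : G.IsChordal) (h : G.IsMinSeparator c f Bs)
    (ha : a ∈ Bs) (hb : b ∈ Bs) (hab : G.Adj a b) :
    ∃ y, G.InSepComp Bs y f ∧ G.Adj a y ∧ G.Adj b y := by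
  obtain ⟨xa, hxa, hxaa⟩ := h.exists_inSepComp_adj ha
  obtain ⟨xb, hxb, hxbb⟩ := h.exists_inSepComp_adj hb
  obtain ⟨w, hw⟩ := inSepComp_iff_exists_walk.1 (hxa.trans hxb.symm)
  have hmem : ∀ z ∈ (w.concat hxbb).support, z ∈ Bs → z = b := by
    intro z hz hzB
    rw [Walk.support_concat, List.mem_append, List.mem_singleton] at hz
    exact hz.resolve_left fun h' => hw z h' hzB
  obtain ⟨w', hsub, hadj⟩ := hG.exists_walk_forall_adj (w.concat hxbb)
    (fun h' => hab.ne (hmem a h' ha)) hxaa.symm hab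
  obtain ⟨y, hy, z, hz, hyf, hzB, hyz⟩ := w'.exists_inSepComp_adj_mem hxa fun h' => h'.1 hb
  obtain rfl := hmem z (hsub hz) hzB
  exact ⟨y, hyf, hadj y hy, hyz.symm⟩

theorem IsChordal.exists_adj_adj_adj_of_walk (hG : G.IsChordal) (w : G.Walk c d) (hcd : c ≠ d)
    (ha : a ∉ w.support) (hb : b ∉ w.support) (hac : G.Adj a c) (had : G.Adj a d)
    (hbc : G.Adj b c) (hbd : G.Adj b d) :
    ∃ v ∈ w.support, G.Adj c v ∧ G.Adj a v ∧ G.Adj b v := by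
  obtain ⟨w₁, hs₁, ha₁⟩ := hG.exists_walk_forall_adj w ha hac had
  obtain ⟨w₂, hs₂, hb₂⟩ := hG.exists_walk_forall_adj w₁ (fun h => hb (hs₁ h)) hbc hbd
  have hsnd : w₂.snd ∈ w₂.support := w₂.getVert_mem_support 1
  exact ⟨w₂.snd, hs₁ (hs₂ hsnd), w₂.adj_snd (Walk.not_nil_of_ne hcd), ha₁ _ (hs₂ hsnd),
    hb₂ _ hsnd⟩

end SimpleGraph

namespace CoxeterMatrix

variable {B : Type*} {M : CoxeterMatrix B} {A : Set B} {a b c d t v : B}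

open SimpleGraph

lemma isSimplex_triple (hab : M a b ≠ 0) (hac : M a c ≠ 0) (hbc : M b c ≠ 0) :
    M.IsSimplex {a, b, c} := by
  rintro u (rfl | rfl | rfl) w (rfl | rfl | rfl) huw <;>
    first | exact absurd rfl huw | assumption | (rw [M.symmetric]; assumption)

lemma IsSimplex.pDiagram_adj (hA : M.IsSimplex A) (ha : a ∈ A) (hb : b ∈ A) (hab : a ≠ b) :
    M.pDiagram.Adj a b :=
  ⟨hab, hA ha hb hab⟩

lemma IsIrreducible.exists_ne_two (hA : M.IsIrreducible A) (ha : a ∈ A) (hb : b ∈ A)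
    (hab : a ≠ b) : ∃ t ∈ A, a ≠ t ∧ M a t ≠ 2 := by
  obtain ⟨w⟩ := hA.preconnected ⟨a, ha⟩ ⟨b, hb⟩
  exact ⟨_, Subtype.prop _, w.adj_snd (Walk.not_nil_of_ne fun h => hab congr($h.1))⟩

lemma IsIrreducible.ne_of_eq_two (hA : M.IsIrreducible {a, b, c}) (hab : M a b = 2) :
    a ≠ c ∧ b ≠ c := by
  have hne : a ≠ b := by rintro rfl; simp at hab
  obtain ⟨t, ht, hat, hmt⟩ := hA.exists_ne_two (by simp) (by simp) hne
  obtain ⟨t', ht', hbt', hmt'⟩ := hA.exists_ne_two (by simp) (by simp) hne.symm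
  constructor
  · rcases ht with rfl | rfl | rfl
    exacts [absurd rfl hat, absurd hab hmt, hat]
  · rcases ht' with rfl | rfl | rfl
    exacts [absurd (M.symmetric _ _ ▸ hab) hmt', absurd rfl hbt', hbt']

protected lemma IsIrreducible.insert (hA : M.IsIrreducible A) (ht : t ∈ A) (hvt : v ≠ t)
    (hm : M v t ≠ 2) : M.IsIrreducible (insert v A) := by
  let φ : M.cDiagramOn A →g M.cDiagramOn (insert v A) :=
    ⟨Set.inclusion (Set.subset_insert v A), id⟩
  refine (connected_iff_exists_forall_reachable _).2 ⟨φ ⟨t, ht⟩, ?_⟩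
  rintro ⟨u, rfl | hu⟩
  · exact (show (M.cDiagramOn _).Adj ⟨u, Set.mem_insert u A⟩ (φ ⟨t, ht⟩) from
      ⟨hvt, hm⟩).reachable.symm
  · exact (hA.preconnected ⟨t, ht⟩ ⟨u, hu⟩).map φ

lemma IsMaxIrredSimplex.mem_perp (hA : M.IsMaxIrredSimplex A)
    (hv : ∀ t ∈ A, M.pDiagram.Adj v t) : v ∈ M.perp A := by
  have hvA : v ∉ A := fun h => (hv v h).ne rfl
  by_contra hp
  obtain ⟨t, ht, hm⟩ : ∃ t ∈ A, M v t ≠ 2 := by simpa [perp] using hp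
  refine hA.2 _ (Set.ssubset_insert hvA) ⟨hA.1.1.insert fun u hu _ => ?_,
    hA.1.2.insert ht (hv t ht).ne hm⟩
  exact ⟨(hv u hu).2, by rw [M.symmetric]; exact (hv u hu).2⟩

lemma exists_notMem_union_perp_of_isMinSeparator (hch : M.pDiagram.IsChordal) {Bs : Set B}
    {f : B} (hmin : M.pDiagram.IsMinSeparator c f Bs) (ha : a ∈ Bs) (hb : b ∈ Bs)
    (hab : M a b = 2) :
    ∃ d, d ∉ ({a, b, c} : Set B) ∪ M.perp {a, b, c} ∧ M.IsSimplex {a, b, d} := by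
  have hab' : M.pDiagram.Adj a b := ⟨by rintro rfl; simp at hab, by simp [hab]⟩
  obtain ⟨y, hyf, hay, hby⟩ := hch.exists_inSepComp_adj_adj hmin ha hb hab'
  obtain ⟨hc, -, hcf⟩ := isSeparator_iff.1 hmin.1
  have hyc : y ≠ c := by rintro rfl; exact hcf hyf
  have hyc' : ¬ M.pDiagram.Adj y c := fun h =>
    hcf ((inSepComp_of_adj h.symm hc hyf.1).trans hyf)
  refine ⟨y, ?_, isSimplex_triple (by simp [hab]) hay.2 hby.2⟩
  rintro ((rfl | rfl | rfl) | hy)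
  · exact hay.ne rfl
  · exact hby.ne rfl
  · exact hyc rfl
  · exact hyc' ⟨hyc, by simp [hy c (by simp)]⟩

lemma exists_isMinSeparator_of_notMem_union_perp [Finite B] (hch : M.pDiagram.IsChordal)
    (hmax : M.IsMaxIrredSimplex {a, b, c}) (hab : M a b = 2)
    (hd : d ∉ ({a, b, c} : Set B) ∪ M.perp {a, b, c}) (habd : M.IsSimplex {a, b, d}) :
    ∃ Bs ⊆ {a, b} ∪ M.perp {a, b, c},
      a ∈ Bs ∧ b ∈ Bs ∧ M.pDiagram.IsMinSeparator c d Bs := by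
  obtain ⟨hac, hbc⟩ := hmax.1.2.ne_of_eq_two hab
  have hac' : M.pDiagram.Adj a c := hmax.1.1.pDiagram_adj (by simp) (by simp) hac
  have hbc' : M.pDiagram.Adj b c := hmax.1.1.pDiagram_adj (by simp) (by simp) hbc
  have had : M.pDiagram.Adj a d :=
    habd.pDiagram_adj (by simp) (by simp) (by rintro rfl; simp at hd)
  have hbd : M.pDiagram.Adj b d :=
    habd.pDiagram_adj (by simp) (by simp) (by rintro rfl; simp at hd)
  set K := {a, b} ∪ M.perp {a, b, c}
  have hcK : c ∉ K := by
    rintro ((rfl | rfl) | hc)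
    exacts [hac rfl, hbc rfl, by simpa using hc c (by simp)]
  have hdK : d ∉ K := by
    rintro ((rfl | rfl) | h)
    exacts [hd (by simp), hd (by simp), hd (.inr h)]
  have hsep : M.pDiagram.IsSeparator c d K := by
    refine isSeparator_iff.2 ⟨hcK, hdK, fun hcd => ?_⟩
    obtain ⟨w, hw⟩ := inSepComp_iff_exists_walk.1 hcd
    obtain ⟨v, hv, hcv, hav, hbv⟩ := hch.exists_adj_adj_adj_of_walk w
      (by rintro rfl; simp at hd) (fun h => hw a h (by simp [K])) (fun h => hw b h (by simp [K]))
      hac' had hbc' hbd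
    refine hw v hv (.inr (hmax.mem_perp ?_))
    rintro t (rfl | rfl | rfl)
    exacts [hav.symm, hbv.symm, hcv.symm]
  obtain ⟨Bs, hBsK, hmin⟩ := hsep.exists_isMinSeparator_subset
  exact ⟨Bs, hBsK, hmin.1.mem_of_adj hac'.symm had, hmin.1.mem_of_adj hbc'.symm hbd, hmin⟩

end CoxeterMatrix

open CoxeterMatrix SimpleGraph in
theorem exists_badSeparator_iff_general {B : Type*} [Finite B] (M : CoxeterMatrix B)
    (E : B → B → Prop)
    (hch : M.pDiagram.IsChordal) :
    (∃ Bs : Set B, M.IsBadSeparator E Bs) ↔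
      ∃ a b c d : B, M.IsMaxIrredSimplex {a, b, c} ∧ M.IsBadSimplex E {a, b, c} ∧
        M a b = 2 ∧ d ∉ ({a, b, c} : Set B) ∪ M.perp {a, b, c} ∧
        M.IsSimplex {a, b, d} := by
  constructor
  · rintro ⟨Bs, a, b, c, haB, hbB, hab, -, hmax, hbad, -, f, -, hmin⟩
    obtain ⟨d, hd, habd⟩ := exists_notMem_union_perp_of_isMinSeparator hch hmin haB hbB hab
    exact ⟨a, b, c, d, hmax, hbad, hab, hd, habd⟩
  · rintro ⟨a, b, c, d, hmax, hbad, hab, hd, habd⟩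
    obtain ⟨Bs, hBs, haB, hbB, hmin⟩ :=
      exists_isMinSeparator_of_notMem_union_perp hch hmax hab hd habd
    obtain ⟨hcB, hdB, -⟩ := isSeparator_iff.1 hmin.1
    exact ⟨Bs, a, b, c, haB, hbB, hab, hcB, hmax, hbad, hBs, d, hdB, hmin⟩

/-- **Lemma 4.4.** Let `(W,S)` be a chordal Coxeter system with a set of bad
irreducible simplices. Then `S` has a bad separator if and only if there is a bad
maximal irreducible simplex `A = {a,b,c}` with `m(a,b) = 2` and an element
`d ∈ S − (A ∪ A^⊥)` such that `{a,b,d}` is a simplex. -/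
theorem exists_badSeparator_iff {B : Type*} [Finite B] (M : CoxeterMatrix B)
    (E : B → B → Prop) (hE : M.IsBadEdgeSet E)
    (hch : M.pDiagram.IsChordal) :
    (∃ Bs : Set B, M.IsBadSeparator E Bs) ↔
      ∃ a b c d : B, M.IsMaxIrredSimplex {a, b, c} ∧ M.IsBadSimplex E {a, b, c} ∧
        M a b = 2 ∧ d ∉ ({a, b, c} : Set B) ∪ M.perp {a, b, c} ∧
        M.IsSimplex {a, b, d} :=
  exists_badSeparator_iff_general M E hch
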